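/- If U ∈ D^{1,2}(ℝ³,ℝ³) is SO(2)×SO(2)-symmetric, then U is SO-equivariant, i.e., g̃U(x) = U(g̃x) for every g ∈ SO(2) and a.e. x ∈ ℝ³, where g̃ = diag(g,1). -/

import Mathlib

open MeasureTheory Filter

noncomputable section

/-- Euclidean space `ℝ³`. -/
abbrev E3 := EuclideanSpace ℝ (Fin 3)

abbrev E3L := E3 →L[ℝ] E3

/-- The vector `(a, b, c) ∈ ℝ³`. -/
def mk3 (a b c : ℝ) : E3 := (EuclideanSpace.equiv (Fin 3) ℝ).symm ![a, b, c]

/-- `r(x) = √(x₁² + x₂²)`. -/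
def r3 (x : E3) : ℝ := Real.sqrt ((x 0) ^ 2 + (x 1) ^ 2)

/-- The tangential direction field `(−x₂, x₁, 0)`. -/
def tang3 (x : E3) : E3 := mk3 (-(x 1)) (x 0) 0

/-- Standard basis vectors of `ℝ³`. -/
def e3 (i : Fin 3) : E3 := EuclideanSpace.single i 1

/-- Euclidean scalar product on `ℝ³`. -/
def dot3 (a b : E3) : ℝ := ∑ i : Fin 3, a i * b i

/-- Action of a `2 × 2` matrix on the first two coordinates of `ℝ³` (i.e. the action of
`g̃ = diag(g, 1)`). -/
def act2 (g : Matrix (Fin 2) (Fin 2) ℝ) (x : E3) : E3 :=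
  mk3 (g 0 0 * x 0 + g 0 1 * x 1) (g 1 0 * x 0 + g 1 1 * x 1) (x 2)

/-- Membership in `O(2)`. -/
def inO2 (g : Matrix (Fin 2) (Fin 2) ℝ) : Prop := g ∈ Matrix.orthogonalGroup (Fin 2) ℝ

/-- Membership in `SO(2)`. -/
def inSO2 (g : Matrix (Fin 2) (Fin 2) ℝ) : Prop := inO2 g ∧ g.det = 1

/-- Smooth compactly supported vector field (test field). -/
def IsTestV (φ : E3 → E3) : Prop := ContDiff ℝ (⊤ : ℕ∞) φ ∧ HasCompactSupport φ

/-- Smooth compactly supported scalar function (test function). -/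
def IsTestS (φ : E3 → ℝ) : Prop := ContDiff ℝ (⊤ : ℕ∞) φ ∧ HasCompactSupport φ

/-- `U ∈ D^{1,2}(ℝ³, ℝ³)` with (weak) differential `DU`: the pair `(U, DU)` is approximated,
in the `L²` norm of the differentials (the norm of `D^{1,2}`) and in `L⁶` (Sobolev embedding),
by smooth compactly supported vector fields; `D^{1,2}(ℝ³,ℝ³)` is the completion of
`C_c^∞(ℝ³,ℝ³)` in the norm `|∇U|₂`. -/
def MemD12V (U : E3 → E3) (DU : E3 → E3L) : Prop :=
  MemLp DU 2 volume ∧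
  ∀ ε : ℝ, 0 < ε → ∃ φ : E3 → E3, IsTestV φ ∧
    eLpNorm (fun x => fderiv ℝ φ x - DU x) 2 volume ≤ ENNReal.ofReal ε ∧
    eLpNorm (fun x => φ x - U x) 6 volume ≤ ENNReal.ofReal ε

/-- The curl `∇ × U` at a point, computed from the differential `T = DU x`. -/
def curl3 (T : E3L) : E3 :=
  mk3 (T (e3 1) 2 - T (e3 2) 1) (T (e3 2) 0 - T (e3 0) 2) (T (e3 0) 1 - T (e3 1) 0)

/-- Frobenius inner product of two differentials, `⟨∇U, ∇V⟩`. -/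
def frobInner (T S : E3L) : ℝ := ∑ i : Fin 3, dot3 (T (e3 i)) (S (e3 i))

/-- Squared Frobenius norm of a differential, `|∇U|²`. -/
def frobSq (T : E3L) : ℝ := frobInner T T

/-- `H(x, w) = ∫₀¹ ⟨h(x, t w), w⟩ dt`. -/
def Hfun (h : E3 → E3 → E3) (x : E3) (w : E3) : ℝ := ∫ t in (0:ℝ)..1, dot3 (h x (t • w)) w

/-- The curl–curl energy functional
`𝓔(U) = ½ ∫ |∇×U|² dx − ∫ H(x, U) dx`. -/
def Efun (h : E3 → E3 → E3) (U : E3 → E3) (DU : E3 → E3L) : ℝ :=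
  (1/2) * (∫ x : E3, ‖curl3 (DU x)‖ ^ 2) - ∫ x : E3, Hfun h x (U x)

/-- `U` is a critical point of `𝓔` on `D^{1,2}(ℝ³,ℝ³)`, i.e. a solution of
`∇×(∇×U) = h(x, U)`:  `𝓔'(U)(V) = ∫ ⟨∇×U, ∇×V⟩ − ⟨h(x,U), V⟩ dx = 0` for all
`V ∈ D^{1,2}(ℝ³,ℝ³)`. -/
def IsCritE (h : E3 → E3 → E3) (U : E3 → E3) (DU : E3 → E3L) : Prop :=
  MemD12V U DU ∧ ∀ V DV, MemD12V V DV →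
    (∫ x : E3, dot3 (curl3 (DU x)) (curl3 (DV x))) - (∫ x : E3, dot3 (h x (U x)) (V x)) = 0

/-- A scalar function on `ℝ³` is `O(2)×{1}`-invariant. -/
def OInvS (b : E3 → ℝ) : Prop := ∀ g, inO2 g → ∀ᵐ x : E3 ∂volume, b (act2 g x) = b x

/-- `U ∈ 𝓕`: `U(x) = (b(x)/r)(−x₂, x₁, 0)` for some `O(2)×{1}`-invariant `b`. -/
def MemFform (U : E3 → E3) : Prop :=
  ∃ b : E3 → ℝ, OInvS b ∧ ∀ᵐ x : E3 ∂volume, U x = (b x / r3 x) • tang3 x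

/-- `U ∈ 𝓓_𝓕 = D^{1,2}(ℝ³,ℝ³) ∩ 𝓕` (with weak differential `DU`). -/
def MemDF (U : E3 → E3) (DU : E3 → E3L) : Prop := MemD12V U DU ∧ MemFform U

/-- `u ∈ D^{1,2}(ℝ³)` with weak gradient `Du`. -/
def MemD12S (u : E3 → ℝ) (Du : E3 → E3) : Prop :=
  MemLp Du 2 volume ∧
  ∀ ε : ℝ, 0 < ε → ∃ φ : E3 → ℝ, IsTestS φ ∧
    eLpNorm (fun x => gradient φ x - Du x) 2 volume ≤ ENNReal.ofReal ε ∧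
    eLpNorm (fun x => φ x - u x) 6 volume ≤ ENNReal.ofReal ε

/-- `u ∈ X = {u ∈ D^{1,2}(ℝ³) : ∫ u²/r² < ∞}`. -/
def MemX3 (u : E3 → ℝ) (Du : E3 → E3) : Prop :=
  MemD12S u Du ∧ Integrable (fun x => (u x) ^ 2 / (r3 x) ^ 2) volume

/-- `u ∈ X_𝓞`: member of `X` invariant under `𝓞 = O(2)×{1}`. -/
def MemXO3 (u : E3 → ℝ) (Du : E3 → E3) : Prop := MemX3 u Du ∧ OInvS u

/-- `F(x, t) = ∫₀ᵗ f(x, s) ds`. -/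
def Fint3 (f : E3 → ℝ → ℝ) (x : E3) (t : ℝ) : ℝ := ∫ s in (0:ℝ)..t, f x s

/-- The Schrödinger energy functional
`𝓙(u) = ½ ∫ (|∇u|² + a u²/r²) dx − ∫ F(x, u) dx`. -/
def J3 (a : ℝ) (f : E3 → ℝ → ℝ) (u : E3 → ℝ) (Du : E3 → E3) : ℝ :=
  (1/2) * (∫ x : E3, (‖Du x‖ ^ 2 + a * (u x) ^ 2 / (r3 x) ^ 2)) - ∫ x : E3, Fint3 f x (u x)

/-- `𝓙'(u)(v) = ∫ (⟨∇u, ∇v⟩ + a u v / r²) dx − ∫ f(x,u) v dx`. -/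
def J3pair (a : ℝ) (f : E3 → ℝ → ℝ) (u : E3 → ℝ) (Du : E3 → E3)
    (v : E3 → ℝ) (Dv : E3 → E3) : ℝ :=
  (∫ x : E3, (dot3 (Du x) (Dv x) + a * u x * v x / (r3 x) ^ 2)) - ∫ x : E3, f x (u x) * v x

/-- `u ∈ X_𝓞` is a critical point of `𝓙|_{X_𝓞}`, i.e. a solution of `−Δu + a u/r² = f(x,u)`. -/
def IsCritJ3 (a : ℝ) (f : E3 → ℝ → ℝ) (u : E3 → ℝ) (Du : E3 → E3) : Prop :=
  MemXO3 u Du ∧ ∀ v Dv, MemXO3 v Dv → J3pair a f u Du v Dv = 0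

/-- `φ(x) = √(2/(1 + |x|²))`. -/
def phi3 (x : E3) : ℝ := Real.sqrt (2 / (1 + ‖x‖ ^ 2))

/-- The conformal action of `(g₁, g₂) ∈ O(2) × O(2)` on `ℝ³`:
`x ↦ π(diag(g₁,g₂) π⁻¹(x))`, where `π` is the stereographic projection
`S³ ∖ {(0,0,0,1)} → ℝ³` and `π⁻¹(x) = (2x₁, 2x₂, 2x₃, |x|²−1)/(|x|²+1)`. -/
def confAct (g1 g2 : Matrix (Fin 2) (Fin 2) ℝ) (x : E3) : E3 :=
  let s : ℝ := (x 0) ^ 2 + (x 1) ^ 2 + (x 2) ^ 2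
  let ξ0 : ℝ := 2 * x 0 / (s + 1)
  let ξ1 : ℝ := 2 * x 1 / (s + 1)
  let ξ2 : ℝ := 2 * x 2 / (s + 1)
  let ξ3 : ℝ := (s - 1) / (s + 1)
  let η0 : ℝ := g1 0 0 * ξ0 + g1 0 1 * ξ1
  let η1 : ℝ := g1 1 0 * ξ0 + g1 1 1 * ξ1
  let η2 : ℝ := g2 0 0 * ξ2 + g2 0 1 * ξ3
  let η3 : ℝ := g2 1 0 * ξ2 + g2 1 1 * ξ3
  mk3 (η0 / (1 - η3)) (η1 / (1 - η3)) (η2 / (1 - η3))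

/-- `U` is `SO(2)×SO(2)`-symmetric:
`U(π(gπ⁻¹(x)))/φ(π(gπ⁻¹(x))) = g̃₁ U(x)/φ(x)` for all `g₁, g₂ ∈ SO(2)` and a.e. `x`. -/
def SOSOSymmetric (U : E3 → E3) : Prop :=
  ∀ g1 g2, inSO2 g1 → inSO2 g2 → ∀ᵐ x : E3 ∂volume,
    (phi3 (confAct g1 g2 x))⁻¹ • U (confAct g1 g2 x) = (phi3 x)⁻¹ • act2 g1 (U x)

/-- `U` is `𝓢𝓞`-equivariant: `g̃ U(x) = U(g̃ x)` for every `g ∈ SO(2)` and a.e. `x`. -/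
def SOEquivariant (U : E3 → E3) : Prop :=
  ∀ g, inSO2 g → ∀ᵐ x : E3 ∂volume, act2 g (U x) = U (act2 g x)

/-- `v` is `Γ`-invariant, `Γ = O(2)×O(2)` acting conformally on `ℝ³`:
`|det γ̃'(x)|^{1/6} v(γ̃(x)) = v(x)` for all `γ ∈ Γ` and a.e. `x`. -/
def GammaInvariant (v : E3 → ℝ) : Prop :=
  ∀ g1 g2, inO2 g1 → inO2 g2 → ∀ᵐ x : E3 ∂volume,
    |LinearMap.det (fderiv ℝ (confAct g1 g2) x).toLinearMap| ^ ((1:ℝ)/6) *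
      v (confAct g1 g2 x) = v x

/-- Translation by `k ∈ ℤ` in the `x₃` variable. -/
def trz3 (k : ℤ) (x : E3) : E3 := x + mk3 0 0 (k : ℝ)

/-- (F1) for `N = 3`, `K = 2`: `f` is a Carathéodory function, `𝓞 = O(2)×{1}`-invariant in `x`
and `ℤ`-periodic in `x₃`. -/
def F1₃ (f : E3 → ℝ → ℝ) : Prop :=
  (∀ t : ℝ, Measurable fun x => f x t) ∧
  (∀ᵐ x : E3 ∂volume, Continuous fun t => f x t) ∧
  (∀ g, inO2 g → ∀ t : ℝ, ∀ᵐ x : E3 ∂volume, f (act2 g x) t = f x t) ∧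
  (∀ k : ℤ, ∀ t : ℝ, ∀ᵐ x : E3 ∂volume, f (trz3 k x) t = f x t)

/-- (F2) for `N = 3`: `lim_{|u|→0} f(x,u)/|u|⁵ = lim_{|u|→∞} f(x,u)/|u|⁵ = 0` uniformly in `x`. -/
def F2₃ (f : E3 → ℝ → ℝ) : Prop :=
  (∀ ε > (0:ℝ), ∃ δ > (0:ℝ), ∀ᵐ x : E3 ∂volume, ∀ t : ℝ, |t| ≤ δ → |f x t| ≤ ε * |t| ^ 5) ∧
  (∀ ε > (0:ℝ), ∃ M > (0:ℝ), ∀ᵐ x : E3 ∂volume, ∀ t : ℝ, M ≤ |t| → |f x t| ≤ ε * |t| ^ 5)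

/-- (F3) for `N = 3`: `lim_{|u|→∞} F(x,u)/|u|² = ∞` uniformly in `x`. -/
def F3₃ (f : E3 → ℝ → ℝ) : Prop :=
  ∀ M : ℝ, ∃ R > (0:ℝ), ∀ᵐ x : E3 ∂volume, ∀ t : ℝ, R ≤ |t| → M * t ^ 2 ≤ Fint3 f x t

/-- (F4) for `N = 3`: `u ↦ f(x,u)/|u|` is nondecreasing on `(−∞,0)` and on `(0,∞)`. -/
def F4₃ (f : E3 → ℝ → ℝ) : Prop :=
  ∀ᵐ x : E3 ∂volume, ∀ s t : ℝ, s ≤ t → (t < 0 ∨ 0 < s) → f x s / |s| ≤ f x t / |t|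

/-- (F5) for `N = 3` (for `f` not depending on `y`): `∃ γ > 2` with `f(x,u)u ≥ γ F(x,u)`,
and `F(·, u₀)` has positive essential infimum for some `u₀`. -/
def F5₃ (f : E3 → ℝ → ℝ) : Prop :=
  ∃ γ > (2:ℝ), (∀ᵐ x : E3 ∂volume, ∀ t : ℝ, γ * Fint3 f x t ≤ f x t * t) ∧
    ∃ t₀ : ℝ, ∃ c > (0:ℝ), ∀ᵐ x : E3 ∂volume, c ≤ Fint3 f x t₀


lemma mk3_apply0 (a b c : ℝ) : mk3 a b c 0 = a := rfl
lemma mk3_apply1 (a b c : ℝ) : mk3 a b c 1 = b := rfl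
lemma mk3_apply2 (a b c : ℝ) : mk3 a b c 2 = c := rfl

lemma norm_sq_E3 (x : E3) : ‖x‖ ^ 2 = (x 0) ^ 2 + (x 1) ^ 2 + (x 2) ^ 2 := by
  rw [EuclideanSpace.norm_eq, Real.sq_sqrt (by positivity)]
  simp [Fin.sum_univ_three, sq]

lemma inSO2_one : inSO2 (1 : Matrix (Fin 2) (Fin 2) ℝ) := by
  constructor
  · exact Submonoid.one_mem _
  · simp

lemma O2_entries {g : Matrix (Fin 2) (Fin 2) ℝ} (hg : inO2 g) :
    g 0 0 ^ 2 + g 1 0 ^ 2 = 1 ∧ g 0 1 ^ 2 + g 1 1 ^ 2 = 1 ∧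
      g 0 0 * g 0 1 + g 1 0 * g 1 1 = 0 := by
  have h := (Matrix.mem_orthogonalGroup_iff' (Fin 2) ℝ).mp hg
  have h00 := congrFun (congrFun h 0) 0
  have h11 := congrFun (congrFun h 1) 1
  have h01 := congrFun (congrFun h 0) 1
  simp [Matrix.mul_apply, Matrix.star_eq_conjTranspose, Matrix.conjTranspose_apply,
    Fin.sum_univ_two, Matrix.one_apply] at h00 h11 h01
  refine ⟨?_, ?_, ?_⟩ <;> nlinarith [h00, h11, h01]

lemma act2_norm_sq {g : Matrix (Fin 2) (Fin 2) ℝ} (hg : inO2 g) (x : E3) :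
    ‖act2 g x‖ ^ 2 = ‖x‖ ^ 2 := by
  obtain ⟨h1, h2, h3⟩ := O2_entries hg
  rw [norm_sq_E3, norm_sq_E3]
  show (g 0 0 * x 0 + g 0 1 * x 1) ^ 2 + (g 1 0 * x 0 + g 1 1 * x 1) ^ 2 + (x 2) ^ 2
      = (x 0) ^ 2 + (x 1) ^ 2 + (x 2) ^ 2
  linear_combination x 0 ^ 2 * h1 + x 1 ^ 2 * h2 + 2 * x 0 * x 1 * h3

lemma phi3_act2 {g : Matrix (Fin 2) (Fin 2) ℝ} (hg : inO2 g) (x : E3) :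
    phi3 (act2 g x) = phi3 x := by
  unfold phi3
  rw [act2_norm_sq hg]

lemma phi3_pos (x : E3) : 0 < phi3 x := by
  unfold phi3
  positivity

lemma confAct_one (g : Matrix (Fin 2) (Fin 2) ℝ) (x : E3) :
    confAct g 1 x = act2 g x := by
  unfold confAct act2
  have hs : (x 0) ^ 2 + (x 1) ^ 2 + (x 2) ^ 2 + 1 ≠ 0 := by positivity
  simp only [Matrix.one_apply_eq, Matrix.one_apply_ne (by decide : (0:Fin 2) ≠ 1),
    Matrix.one_apply_ne (by decide : (1:Fin 2) ≠ 0)]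
  congr 1 <;> field_simp <;> ring

/-- **Lemma.** If `U ∈ D^{1,2}(ℝ³,ℝ³)` is `SO(2)×SO(2)`-symmetric, then `U` is
`𝓢𝓞`-equivariant: `g̃ U(x) = U(g̃ x)` for every `g ∈ SO(2)` and a.e. `x ∈ ℝ³`. -/
theorem statement_10 (U : E3 → E3) (DU : E3 → E3L)
    (hU : MemD12V U DU) (hsym : SOSOSymmetric U) :
    SOEquivariant U := by
  intro g hg
  filter_upwards [hsym g 1 hg inSO2_one] with x hx
  rw [confAct_one, phi3_act2 hg.1] at hx
  have hne : (phi3 x)⁻¹ ≠ 0 := inv_ne_zero (phi3_pos x).ne'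
  exact (smul_right_injective E3 hne hx).symm


end
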